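/- Let N be a free abelian group equipped with a symmetric bilinear form of signature (1, ρ−1) (a hyperbolic lattice). Suppose H, C ∈ N satisfy H·H > 0. Then (H·H)(C·C) ≤ (H·C)². -/
import Mathlib


/-- The standard symmetric bilinear form of signature `(1, ρ)` on `ℤ × (Fin ρ → ℤ)`
(a hyperbolic lattice of rank `ρ + 1`). -/
def hypForm (ρ : ℕ) (x y : ℤ × (Fin ρ → ℤ)) : ℤ :=
  x.1 * y.1 - ∑ i, x.2 i * y.2 i

/-- Hodge index inequality: for a bilinear form of signature `(1, ρ-1)`, if `H·H > 0`
then `(H·H)(C·C) ≤ (H·C)²`. -/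
theorem hodge_index_inequality (ρ : ℕ) (H C : ℤ × (Fin ρ → ℤ))
    (hH : 0 < hypForm ρ H H) :
    hypForm ρ H H * hypForm ρ C C ≤ (hypForm ρ H C) ^ 2 := by
  unfold hypForm at *
  set a := H.1 with ha
  set b := C.1 with hb
  set S := ∑ i, H.2 i ^ 2 with hS
  set T := ∑ i, C.2 i ^ 2 with hT
  set A := ∑ i, H.2 i * C.2 i with hA
  have hHS : ∑ i, H.2 i * H.2 i = S := by simp [hS, sq]
  have hCT : ∑ i, C.2 i * C.2 i = T := by simp [hT, sq]
  rw [hHS] at hH ⊢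
  rw [hCT]
  have hcs : A ^ 2 ≤ S * T := Finset.sum_mul_sq_le_sq_mul_sq _ _ _
  have hS0 : 0 ≤ S := Finset.sum_nonneg fun i _ => sq_nonneg _
  set d := a * a - S with hd
  set e := a * b - A with he
  set W := d ^ 2 * T - 2 * d * e * A + e ^ 2 * S with hW
  have hWsum : ∑ i, (d * C.2 i - e * H.2 i) ^ 2 = W := by
    rw [hW, hT, hA, hS, Finset.mul_sum, Finset.mul_sum, Finset.mul_sum,
      ← Finset.sum_sub_distrib, ← Finset.sum_add_distrib]
    exact Finset.sum_congr rfl fun i _ => by ring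
  have hW0 : 0 ≤ W := hWsum ▸ Finset.sum_nonneg fun i _ => sq_nonneg _
  have key : S * W - a ^ 2 * (a * A - S * b) ^ 2 = d ^ 2 * (S * T - A ^ 2) := by
    rw [hW, hd, he]; ring
  have h1 : a ^ 2 * (a * A - S * b) ^ 2 ≤ S * W := by
    linarith [key, mul_nonneg (sq_nonneg d) (sub_nonneg.2 hcs)]
  have h2 : S * W ≤ a ^ 2 * W := by
    apply mul_le_mul_of_nonneg_right _ hW0
    rw [sq]; linarith
  have ha2 : 0 < a ^ 2 := by rw [sq]; linarith
  have h3 : (a * A - S * b) ^ 2 ≤ W := le_of_mul_le_mul_left (by linarith) ha2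
  have hid : (a * A - S * b) ^ 2 - W = d * (d * (b * b - T) - e ^ 2) := by
    rw [hW, hd, he]; ring
  have h4 : d * (d * (b * b - T) - e ^ 2) ≤ 0 := by linarith [hid ▸ sub_nonpos.mpr h3]
  have h5 : d * (b * b - T) - e ^ 2 ≤ 0 := by
    by_contra hc
    push_neg at hc
    linarith [mul_pos hH hc]
  linarith [h5]
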